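/- arXiv:2604.26131 — 4 statements merged into one kernel-verified Lean document; each statement's English description precedes it below -/
import Mathlib

section
/- Let Λ be a field and v_1, v_2 two nontrivial independent valuations on Λ (i.e. they induce distinct field topologies, equivalently have no common nontrivial coarsening). If v := min(v_1,v_2) is the finest common coarsening (here the trivial valuation, so O_v = Λ), then (1+m_{v_1})·(1+m_{v_2}) ⊇ Λ^×. -/
open scoped Pointwise

section Aux

variable {Λ : Type*} [Field Λ]

lemma nonunit_mul_mem {O : ValuationSubring Λ} {x y : Λ}
    (hx : x ∈ O.nonunits) (hy : y ∈ O) : x * y ∈ O.nonunits := by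
  rw [ValuationSubring.mem_nonunits_iff] at hx ⊢
  rw [map_mul]
  calc O.valuation x * O.valuation y ≤ O.valuation x * 1 := by
        exact mul_le_mul_right ((O.valuation_le_one_iff y).2 hy) _
    _ = O.valuation x := mul_one _
    _ < 1 := hx

lemma exists_nonunit_ne_zero {O : ValuationSubring Λ} (h : O ≠ ⊤) :
    ∃ t : Λ, t ≠ 0 ∧ t ∈ O.nonunits := by
  have : ∃ x : Λ, x ∉ O := by
    by_contra hc
    push_neg at hc
    exact h (by ext x; simp [hc x, ValuationSubring.mem_top])
  obtain ⟨x, hx⟩ := this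
  have hx0 : x ≠ 0 := fun h0 => hx (h0 ▸ O.zero_mem)
  have h1 : 1 < O.valuation x := by
    by_contra hle
    exact hx ((O.valuation_le_one_iff x).1 (not_lt.1 hle))
  refine ⟨x⁻¹, inv_ne_zero hx0, ?_⟩
  rw [ValuationSubring.mem_nonunits_iff]
  exact (Valuation.one_lt_val_iff O.valuation hx0).1 h1


lemma trade {O : ValuationSubring Λ} {y s t : Λ} (ht0 : t ≠ 0)
    (hyt : y * t ∈ O) (hst : s / t ∈ O) : y * s ∈ O := by
  have h := O.mul_mem _ _ hyt hst
  rwa [show y * t * (s / t) = y * s by field_simp] at h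

/-- Lemma D : there is no `e ≠ 0` with `e • O₁ ⊆ O₂`, given independence. -/
lemma aux_D (O₁ O₂ : ValuationSubring Λ) (h₂ : O₂ ≠ ⊤)
    (hindep : ∀ O : ValuationSubring Λ, O₁ ≤ O → O₂ ≤ O → O = ⊤)
    (e : Λ) (he : e ≠ 0) (hsub : ∀ y ∈ O₁, e * y ∈ O₂) : False := by
  have heO : e ∈ O₂ := by simpa using hsub 1 O₁.one_mem
  by_cases hinv : e⁻¹ ∈ O₂
  · -- then O₁ ≤ O₂ and O₂ is a common coarsening
    have hle : O₁ ≤ O₂ := fun y hy => by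
      have := O₂.mul_mem _ _ hinv (hsub y hy)
      rwa [← mul_assoc, inv_mul_cancel₀ he, one_mul] at this
    exact h₂ (hindep O₂ hle le_rfl)
  · -- build the coarsening OH
    set OH : ValuationSubring Λ :=
      { carrier := {x : Λ | ∃ s : Λ, s ∈ O₂ ∧ s ≠ 0 ∧ x * s ∈ O₂ ∧ ∀ n : ℕ, e * (s ^ n)⁻¹ ∈ O₂}
        one_mem' := ⟨1, O₂.one_mem, one_ne_zero, by simpa using O₂.one_mem,
          fun n => by simpa using heO⟩
        zero_mem' := ⟨1, O₂.one_mem, one_ne_zero, by simpa using O₂.zero_mem,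
          fun n => by simpa using heO⟩
        neg_mem' := by
          rintro x ⟨s, hs, hs0, hxs, hsn⟩
          exact ⟨s, hs, hs0, by rw [neg_mul]; exact O₂.neg_mem _ hxs, hsn⟩
        add_mem' := by
          rintro x y ⟨s, hs, hs0, hxs, hsn⟩ ⟨t, ht, ht0, hyt, htn⟩
          rcases O₂.mem_or_inv_mem (s / t) with hst | hts
          · -- s/t ∈ O₂ : v s ≤ v t, use s for both
            refine ⟨s, hs, hs0, ?_, hsn⟩
            have hys : y * s ∈ O₂ := trade ht0 hyt hst
            rw [add_mul]
            exact O₂.add_mem _ _ hxs hys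
          · rw [inv_div] at hts
            refine ⟨t, ht, ht0, ?_, htn⟩
            have hxt : x * t ∈ O₂ := trade hs0 hxs hts
            rw [add_mul]
            exact O₂.add_mem _ _ hxt hyt
        mul_mem' := by
          rintro x y ⟨s, hs, hs0, hxs, hsn⟩ ⟨t, ht, ht0, hyt, htn⟩
          rcases O₂.mem_or_inv_mem (s / t) with hst | hts
          · -- v s ≤ v t, use s^2
            have hys : y * s ∈ O₂ := trade ht0 hyt hst
            refine ⟨s ^ 2, pow_mem hs 2, pow_ne_zero _ hs0, ?_, fun n => by
              rw [← pow_mul]; exact hsn (2 * n)⟩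
            have : x * y * s ^ 2 = (x * s) * (y * s) := by ring
            rw [this]
            exact O₂.mul_mem _ _ hxs hys
          · rw [inv_div] at hts
            have hxt : x * t ∈ O₂ := trade hs0 hxs hts
            refine ⟨t ^ 2, pow_mem ht 2, pow_ne_zero _ ht0, ?_, fun n => by
              rw [← pow_mul]; exact htn (2 * n)⟩
            have : x * y * t ^ 2 = (x * t) * (y * t) := by ring
            rw [this]
            exact O₂.mul_mem _ _ hxt hyt
        mem_or_inv_mem' := by
          intro x
          rcases O₂.mem_or_inv_mem x with hx | hx
          · exact Or.inl ⟨1, O₂.one_mem, one_ne_zero, by simpa using hx,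
              fun n => by simpa using heO⟩
          · exact Or.inr ⟨1, O₂.one_mem, one_ne_zero, by simpa using hx,
              fun n => by simpa using heO⟩ }
    have hO₂le : O₂ ≤ OH := fun y hy =>
      ⟨1, O₂.one_mem, one_ne_zero, by simpa using hy, fun n => by simpa using heO⟩
    have hO₁le : O₁ ≤ OH := by
      intro y hy
      by_cases hyO₂ : y ∈ O₂
      · exact hO₂le hyO₂
      · have hy0 : y ≠ 0 := fun h0 => hyO₂ (h0 ▸ O₂.zero_mem)
        have hyinv : y⁻¹ ∈ O₂ := (O₂.mem_or_inv_mem y).resolve_left hyO₂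
        refine ⟨y⁻¹, hyinv, inv_ne_zero hy0, by simpa [mul_inv_cancel₀ hy0] using O₂.one_mem,
          fun n => ?_⟩
        rw [← inv_pow, inv_inv]
        exact hsub _ (pow_mem hy n)
    have htop := hindep OH hO₁le hO₂le
    have hmem : e⁻¹ ∈ OH := by rw [htop]; exact ValuationSubring.mem_top _
    obtain ⟨s, hs, hs0, hes, hsn⟩ := hmem
    have h2 := hsn 2
    have hkey : s⁻¹ ∈ O₂ := by
      have := O₂.mul_mem _ _ hes h2
      have heq : e⁻¹ * s * (e * (s ^ 2)⁻¹) = s⁻¹ := by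
        field_simp
      rwa [heq] at this
    have : e⁻¹ ∈ O₂ := by
      have := O₂.mul_mem _ _ hes hkey
      rwa [mul_assoc, mul_inv_cancel₀ hs0, mul_one] at this
    exact hinv this

/-- Lemma C' : the approximation lemma, with normalized thresholds. -/
lemma aux_C' (O₁ O₂ : ValuationSubring Λ) (h₁ : O₁ ≠ ⊤) (h₂ : O₂ ≠ ⊤)
    (hindep : ∀ O : ValuationSubring Λ, O₁ ≤ O → O₂ ≤ O → O = ⊤)
    (a b : Λ) (ha : a ≠ 0) (hb : b ≠ 0) (haO : a ∈ O₁) (hbO : b ∈ O₂) :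
    ∃ u : Λ, u / a ∈ O₁.nonunits ∧ (1 - u) / b ∈ O₂.nonunits := by
  by_contra hc
  push_neg at hc
  obtain ⟨t₀, ht₀0, ht₀⟩ := exists_nonunit_ne_zero h₁
  -- core claim : for every t ∈ m₁, a*b*t ∈ O₂
  have core : ∀ t : Λ, t ∈ O₁.nonunits → a * b * t ∈ O₂ := by
    intro t ht
    have hat : a * t ∈ O₁.nonunits := by
      rw [mul_comm]; exact nonunit_mul_mem ht haO
    have hatlt : O₁.valuation (a * t) < 1 := (ValuationSubring.mem_nonunits_iff _).1 hat
    have hone : O₁.valuation (1 - a * t) = 1 := O₁.valuation.map_one_sub_of_lt hatlt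
    have h1at : (1 : Λ) - a * t ≠ 0 := by
      intro h0
      rw [h0, map_zero] at hone
      exact zero_ne_one hone
    -- apply hc to u' = a * t' with t' = -(t/(1-a*t))
    set t' : Λ := -(t / (1 - a * t)) with ht'def
    have ht' : t' ∈ O₁.nonunits := by
      rw [ValuationSubring.mem_nonunits_iff, ht'def, Valuation.map_neg, map_div₀, hone, div_one]
      exact (ValuationSubring.mem_nonunits_iff _).1 ht
    have hu' : (a * t') / a ∈ O₁.nonunits := by
      rw [mul_comm, mul_div_assoc, div_self ha, mul_one]
      exact ht'
    have hc' := hc (a * t') hu'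
    -- 1 - a * t' = (1 - a*t)⁻¹
    have hcomp : (1 : Λ) - a * t' = (1 - a * t)⁻¹ := by
      rw [ht'def]
      field_simp
      ring
    have hnotnon : O₂.valuation ((1 - a * t)⁻¹ / b) ≥ 1 := by
      rw [← hcomp]
      by_contra hlt
      exact hc' ((ValuationSubring.mem_nonunits_iff _).2 (not_le.1 hlt))
    -- deduce v₂ (b * (1 - a*t)) ≤ 1
    have hb2 : b * (1 - a * t) ∈ O₂ := by
      rw [← O₂.valuation_le_one_iff]
      have hXne : O₂.valuation ((1 - a * t)⁻¹ / b) ≠ 0 := by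
        simp [h1at, hb, sub_eq_zero]
      have hinvle : (O₂.valuation ((1 - a * t)⁻¹ / b))⁻¹ ≤ 1 := by
        have h := mul_le_mul_right hnotnon (O₂.valuation ((1 - a * t)⁻¹ / b))⁻¹
        rwa [mul_one, inv_mul_cancel₀ hXne] at h
      have heq2 : b * (1 - a * t) = ((1 - a * t)⁻¹ / b)⁻¹ := by
        field_simp
      rw [heq2, map_inv₀]
      exact hinvle
    -- a*b*t = b - b*(1 - a*t)
    have heq : a * b * t = b - b * (1 - a * t) := by ring
    rw [heq]
    exact sub_mem hbO hb2
  -- contradiction with Lemma D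
  refine aux_D O₁ O₂ h₂ hindep (a * b * t₀) (by
    exact mul_ne_zero (mul_ne_zero ha hb) ht₀0) ?_
  intro y hy
  have : t₀ * y ∈ O₁.nonunits := nonunit_mul_mem ht₀ hy
  have := core _ this
  rwa [show a * b * (t₀ * y) = a * b * t₀ * y by ring] at this

/-- Lemma C : the approximation lemma. -/
lemma aux_C (O₁ O₂ : ValuationSubring Λ) (h₁ : O₁ ≠ ⊤) (h₂ : O₂ ≠ ⊤)
    (hindep : ∀ O : ValuationSubring Λ, O₁ ≤ O → O₂ ≤ O → O = ⊤)
    (a b : Λ) (ha : a ≠ 0) (hb : b ≠ 0) :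
    ∃ u : Λ, u / a ∈ O₁.nonunits ∧ (1 - u) / b ∈ O₂.nonunits := by
  obtain ⟨a', ha'0, ha'O, ha'div⟩ : ∃ a' : Λ, a' ≠ 0 ∧ a' ∈ O₁ ∧ a' / a ∈ O₁ := by
    by_cases h : a ∈ O₁
    · exact ⟨a, ha, h, by rw [div_self ha]; exact O₁.one_mem⟩
    · exact ⟨1, one_ne_zero, O₁.one_mem,
        by rw [one_div]; exact (O₁.mem_or_inv_mem a).resolve_left h⟩
  obtain ⟨b', hb'0, hb'O, hb'div⟩ : ∃ b' : Λ, b' ≠ 0 ∧ b' ∈ O₂ ∧ b' / b ∈ O₂ := by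
    by_cases h : b ∈ O₂
    · exact ⟨b, hb, h, by rw [div_self hb]; exact O₂.one_mem⟩
    · exact ⟨1, one_ne_zero, O₂.one_mem,
        by rw [one_div]; exact (O₂.mem_or_inv_mem b).resolve_left h⟩
  obtain ⟨u, hu1, hu2⟩ := aux_C' O₁ O₂ h₁ h₂ hindep a' b' ha'0 hb'0 ha'O hb'O
  refine ⟨u, ?_, ?_⟩
  · have := nonunit_mul_mem hu1 ha'div
    rwa [show u / a' * (a' / a) = u / a by field_simp] at this
  · have := nonunit_mul_mem hu2 hb'div
    rwa [show (1 - u) / b' * (b' / b) = (1 - u) / b by field_simp] at this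

end Aux

/-- Let `Λ` be a field and `v₁, v₂` two nontrivial independent valuations
on `Λ` (independent: their only common coarsening is the trivial valuation, i.e. every
valuation subring containing both `O_{v₁}` and `O_{v₂}` is all of `Λ`).  Then
`Λ^× ⊆ (1+m_{v₁})·(1+m_{v₂})` (pointwise product of subsets of `Λ`). -/
theorem stmt_2 {Λ : Type*} [Field Λ] (O₁ O₂ : ValuationSubring Λ)
    (h₁ : O₁ ≠ ⊤) (h₂ : O₂ ≠ ⊤)
    (hindep : ∀ O : ValuationSubring Λ, O₁ ≤ O → O₂ ≤ O → O = ⊤) :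
    {x : Λ | x ≠ 0} ⊆
      ((1 : Set Λ) + (O₁.nonunits : Set Λ)) * ((1 : Set Λ) + (O₂.nonunits : Set Λ)) := by
  intro x hx
  simp only [Set.mem_setOf_eq] at hx
  have h0₁ : (0 : Λ) ∈ O₁.nonunits := by
    rw [ValuationSubring.mem_nonunits_iff, map_zero]; exact zero_lt_one
  have h0₂ : (0 : Λ) ∈ O₂.nonunits := by
    rw [ValuationSubring.mem_nonunits_iff, map_zero]; exact zero_lt_one
  have hone₁ : (1 : Λ) ∈ (1 : Set Λ) + (O₁.nonunits : Set Λ) :=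
    ⟨1, rfl, 0, h0₁, add_zero 1⟩
  have hone₂ : (1 : Λ) ∈ (1 : Set Λ) + (O₂.nonunits : Set Λ) :=
    ⟨1, rfl, 0, h0₂, add_zero 1⟩
  by_cases hx1 : x = 1
  · exact ⟨1, hone₁, 1, hone₂, by simp [hx1]⟩
  · have hxm1 : x - 1 ≠ 0 := sub_ne_zero.2 hx1
    obtain ⟨u, hu1, hu2⟩ := aux_C O₁ O₂ h₁ h₂ hindep (x / (x - 1)) (x - 1)⁻¹
      (div_ne_zero hx hxm1) (inv_ne_zero hxm1)
    -- m := u * (x-1) / x ∈ m₁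
    have hm : u * (x - 1) / x ∈ O₁.nonunits := by
      have : u / (x / (x - 1)) = u * (x - 1) / x := by
        field_simp
      rwa [this] at hu1
    have hm2 : (1 - u) * (x - 1) ∈ O₂.nonunits := by
      have : (1 - u) / (x - 1)⁻¹ = (1 - u) * (x - 1) := by
        field_simp
      rwa [this] at hu2
    set m : Λ := u * (x - 1) / x with hmdef
    have hmlt : O₁.valuation m < 1 := (ValuationSubring.mem_nonunits_iff _).1 hm
    have hq1 : O₁.valuation (1 - m) = 1 := O₁.valuation.map_one_sub_of_lt hmlt
    have hqne : (1 : Λ) - m ≠ 0 := by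
      intro h0
      rw [h0, map_zero] at hq1
      exact zero_ne_one hq1
    -- B := x - u * (x - 1) = x * (1 - m)
    set B : Λ := x - u * (x - 1) with hBdef
    have hBx : B = x * (1 - m) := by
      rw [hmdef, hBdef]
      field_simp
    have hBne : B ≠ 0 := by
      rw [hBx]; exact mul_ne_zero hx hqne
    -- x / B = 1 + m / (1 - m) ∈ 1 + m₁
    have hxB : x / B = 1 + m / (1 - m) := by
      rw [hBx]
      field_simp
      ring
    have hmm : m / (1 - m) ∈ O₁.nonunits := by
      rw [ValuationSubring.mem_nonunits_iff, map_div₀, hq1, div_one]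
      exact hmlt
    have hxBmem : x / B ∈ (1 : Set Λ) + (O₁.nonunits : Set Λ) :=
      ⟨1, rfl, m / (1 - m), hmm, hxB.symm⟩
    -- B = 1 + (1 - u) * (x - 1) ∈ 1 + m₂
    have hB1 : B = 1 + (1 - u) * (x - 1) := by
      rw [hBdef]; ring
    have hBmem : B ∈ (1 : Set Λ) + (O₂.nonunits : Set Λ) :=
      ⟨1, rfl, (1 - u) * (x - 1), hm2, hB1.symm⟩
    exact ⟨x / B, hxBmem, B, hBmem, div_mul_cancel₀ x hBne⟩
end

section
/- Let Λ be a field with valuations v_1, v_2 and let v = min(v_1,v_2) be their finest common coarsening (the valuation whose ring is the localization of O_{v_1} (equivalently O_{v_2}) at the largest prime ideal contained in both Spec(O_{v_1}) and Spec(O_{v_2})). If v < v_1 and v < v_2 strictly, then (1+m_{v_1})·(1+m_{v_2}) = O_v^× = O_{v_1}^×·O_{v_2}^×, and (1+m_{v_1}) − (1+m_{v_2}) = O_v = O_{v_1} − O_{v_2}. -/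
/-!
Put `O = O₁ ⊔ O₂`. Every element of `O` is a product `a * b` with `a ∈ O₁`, `b ∈ O₂`: the set
`{y | y • O₂ ⊆ m₁}` is stable under multiplication by `O₁` and by `O₂`, hence by `O`, and it
contains `w⁻¹` for every `w ∈ O` that is not such a product; then it would contain `1`.

Since `Oᵢ < O`, an element `x ∈ O` is a quotient of elements of `mᵢ` whose denominator is a unit
of `O`. Splitting the product of two such denominators as `a * b` as above yields, for given
`x, y ∈ O`, elements `d * e = 1` with `d, d * x ∈ m₁` and `e, e * y ∈ m₂`. Then
`x = (1 + d * x) / (1 + d) * ((1 + e) / (1 + e * x⁻¹))` and `x = d * x / (1 + d) + e * x / (1 + e)`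
exhibit a unit `x` of `O` as a product of elements of `1 + m₁` and `1 + m₂`, and any `x ∈ O` as
a difference of such elements. All other inclusions are immediate.
-/

open scoped Pointwise

def unitsSet {Λ : Type*} [Field Λ] (O : ValuationSubring Λ) : Set Λ :=
  {x : Λ | x ≠ 0 ∧ x ∈ O ∧ x⁻¹ ∈ O}

section

variable {K : Type*} [Field K] {A B : ValuationSubring K}

theorem mul_mem_nonunits {a x : K} (ha : a ∈ A) (hx : x ∈ A.nonunits) :
    a * x ∈ A.nonunits := by
  rw [A.mem_nonunits_iff, map_mul]
  exact (mul_le_of_le_one_left' ((A.valuation_le_one_iff a).2 ha)).trans_lt hx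

theorem one_add_mem_unitsSet {s : K} (hs : s ∈ A.nonunits) : 1 + s ∈ unitsSet A := by
  have hv : A.valuation (1 + s) = 1 := A.valuation.map_one_add_of_lt hs
  refine ⟨fun h ↦ ?_, A.mem_of_valuation_le_one _ hv.le,
    A.mem_of_valuation_le_one _ (by rw [map_inv₀, hv, inv_one])⟩
  simp [h] at hv

theorem mem_one_add_nonunits_iff {x : K} :
    x ∈ (1 : Set K) + A.nonunits ↔ x - 1 ∈ A.nonunits := by
  simp only [Set.mem_add, Set.mem_one, exists_eq_left, ← eq_sub_iff_add_eq', exists_eq_right,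
    SetLike.mem_coe]

theorem one_add_mem_one_add_nonunits {s : K} (hs : s ∈ A.nonunits) :
    1 + s ∈ (1 : Set K) + A.nonunits :=
  Set.add_mem_add Set.one_mem_one hs

theorem one_add_nonunits_subset_unitsSet : (1 : Set K) + A.nonunits ⊆ unitsSet A := fun x hx ↦
  add_sub_cancel 1 x ▸ one_add_mem_unitsSet (mem_one_add_nonunits_iff.1 hx)

theorem one_add_nonunits_subset_coe : (1 : Set K) + A.nonunits ⊆ A := fun _ hx ↦
  (one_add_nonunits_subset_unitsSet hx).2.1

theorem unitsSet_mul_unitsSet_subset_sup : unitsSet A * unitsSet B ⊆ unitsSet (A ⊔ B) := by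
  rintro _ ⟨x, ⟨hx0, hx, hxinv⟩, y, ⟨hy0, hy, hyinv⟩, rfl⟩
  have hA : A ≤ A ⊔ B := le_sup_left
  have hB : B ≤ A ⊔ B := le_sup_right
  exact ⟨mul_ne_zero hx0 hy0, mul_mem (hA hx) (hB hy),
    (mul_inv x y).symm ▸ mul_mem (hA hxinv) (hB hyinv)⟩

theorem coe_sub_coe_subset_sup : (A : Set K) - B ⊆ (A ⊔ B : ValuationSubring K) := by
  rintro _ ⟨a, ha, b, hb, rfl⟩
  exact sub_mem (le_sup_left (a := A) ha) (le_sup_right (b := B) hb)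

theorem div_mem_one_add_nonunits {u w : K} (hu : u ∈ (1 : Set K) + A.nonunits)
    (hw : w ∈ (1 : Set K) + A.nonunits) : u / w ∈ (1 : Set K) + A.nonunits := by
  obtain ⟨hw0, -, hwinv⟩ := one_add_nonunits_subset_unitsSet hw
  rw [mem_one_add_nonunits_iff] at hu hw ⊢
  have : u / w - 1 = w⁻¹ * ((u - 1) - (w - 1)) := by field_simp; ring
  rw [this]
  exact mul_mem_nonunits hwinv (sub_mem hu hw)

theorem mul_mul_mem_nonunits_of_mem_sup {r y b : K} (hr : r ∈ A ⊔ B)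
    (hy : ∀ b ∈ B, y * b ∈ A.nonunits) (hb : b ∈ B) : r * y * b ∈ A.nonunits := by
  replace hr : r ∈ Subring.closure ((A : Set K) ∪ B) := by
    rwa [Subring.closure_union, show Subring.closure (A : Set K) = A.toSubring from
      A.toSubring.closure_eq, show Subring.closure (B : Set K) = B.toSubring from
      B.toSubring.closure_eq]
  induction hr using Subring.closure_induction generalizing y b with
  | mem r hr =>
    rcases hr with hr | hr
    · simpa only [mul_assoc] using mul_mem_nonunits hr (hy b hb)
    · simpa only [mul_comm r, mul_assoc] using hy _ (mul_mem hr hb)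
  | zero => simp
  | one => simpa using hy b hb
  | add r r' _ _ hr hr' => simpa only [add_mul] using add_mem (hr hy hb) (hr' hy hb)
  | neg r _ hr => simpa only [neg_mul] using neg_mem (hr hy hb)
  | mul r r' _ _ hr hr' => simpa only [mul_assoc] using hr (fun b hb ↦ hr' hy hb) hb

theorem exists_mul_eq_of_mem_sup {w : K} (hw : w ∈ A ⊔ B) : ∃ a ∈ A, ∃ b ∈ B, a * b = w := by
  by_contra! h
  have hw0 : w ≠ 0 := fun h0 ↦ h 0 A.zero_mem 0 B.zero_mem (by rw [h0, mul_zero])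
  have hwinv : ∀ b ∈ B, w⁻¹ * b ∈ A.nonunits := by
    intro b hb
    rw [A.mem_nonunits_iff_or, mul_inv, inv_inv]
    by_cases hb0 : b = 0
    · exact Or.inl (by rw [hb0, mul_zero])
    · exact Or.inr fun hwb ↦ h _ hwb b hb (by field_simp)
  have h1 := mul_mul_mem_nonunits_of_mem_sup hw hwinv B.one_mem
  rw [mul_inv_cancel₀ hw0, mul_one, A.mem_nonunits_iff, map_one] at h1
  exact lt_irrefl _ h1

theorem exists_mem_nonunits_mul_mem_nonunits_of_lt {O : ValuationSubring K} (h : A < O) {x : K}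
    (hx : x ∈ O) : ∃ c ≠ 0, c⁻¹ ∈ O ∧ c ∈ A.nonunits ∧ c * x ∈ A.nonunits := by
  obtain ⟨g, hgO, hgA⟩ := SetLike.exists_of_lt h
  have hg0 : g ≠ 0 := by rintro rfl; exact hgA A.zero_mem
  have hg : g⁻¹ ∈ A.nonunits := A.inv_mem_nonunits_iff.2 (Or.inr hgA)
  by_cases hxA : x ∈ A
  · exact ⟨g⁻¹, inv_ne_zero hg0, by rwa [inv_inv], hg,
      mul_comm x g⁻¹ ▸ mul_mem_nonunits hxA hg⟩
  · have hx0 : x ≠ 0 := by rintro rfl; exact hxA A.zero_mem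
    refine ⟨g⁻¹ * x⁻¹, by simp [hg0, hx0], by simpa [mul_comm] using mul_mem hx hgO,
      mul_mem hg (A.inv_mem_nonunits_iff.2 (Or.inr hxA)), ?_⟩
    rwa [mul_assoc, inv_mul_cancel₀ hx0, mul_one]

theorem exists_mul_eq_one_of_lt_sup (hA : A < A ⊔ B) (hB : B < A ⊔ B) {x y : K}
    (hx : x ∈ A ⊔ B) (hy : y ∈ A ⊔ B) :
    ∃ d e : K, d * e = 1 ∧ d ∈ A.nonunits ∧ d * x ∈ A.nonunits ∧
      e ∈ B.nonunits ∧ e * y ∈ B.nonunits := by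
  obtain ⟨c, hc0, hcinv, hc, hcx⟩ := exists_mem_nonunits_mul_mem_nonunits_of_lt hA hx
  obtain ⟨c', hc'0, hc'inv, hc', hc'y⟩ := exists_mem_nonunits_mul_mem_nonunits_of_lt hB hy
  obtain ⟨a, ha, b, hb, hab⟩ := exists_mul_eq_of_mem_sup
    (show (c * c')⁻¹ ∈ A ⊔ B from (mul_inv c c').symm ▸ mul_mem hcinv hc'inv)
  refine ⟨a * c, b * c', ?_, mul_mem_nonunits ha hc, ?_, mul_mem_nonunits hb hc', ?_⟩
  · rw [show a * c * (b * c') = a * b * (c * c') by ring, hab,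
      inv_mul_cancel₀ (mul_ne_zero hc0 hc'0)]
  · simpa only [mul_assoc] using mul_mem_nonunits ha hcx
  · simpa only [mul_assoc] using mul_mem_nonunits hb hc'y

theorem unitsSet_subset_one_add_nonunits_mul (hA : A < A ⊔ B) (hB : B < A ⊔ B) :
    unitsSet (A ⊔ B) ⊆ ((1 : Set K) + A.nonunits) * ((1 : Set K) + B.nonunits) := by
  rintro x ⟨hx0, hx, hxinv⟩
  obtain ⟨d, e, hde, hd, hdx, he, hex⟩ := exists_mul_eq_one_of_lt_sup hA hB hx hxinv
  refine Set.mem_mul.2 ⟨(1 + d * x) / (1 + d), ?_, (1 + e) / (1 + e * x⁻¹), ?_, ?_⟩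
  · exact div_mem_one_add_nonunits (one_add_mem_one_add_nonunits hdx)
      (one_add_mem_one_add_nonunits hd)
  · exact div_mem_one_add_nonunits (one_add_mem_one_add_nonunits he)
      (one_add_mem_one_add_nonunits hex)
  have h1 : 1 + d ≠ 0 := (one_add_mem_unitsSet hd).1
  have h2 : x + e ≠ 0 := by
    rw [show x + e = x * (1 + e * x⁻¹) by field_simp]
    exact mul_ne_zero hx0 (one_add_mem_unitsSet hex).1
  field_simp
  linear_combination (x - 1) * hde

theorem coe_subset_one_add_nonunits_sub (hA : A < A ⊔ B) (hB : B < A ⊔ B) :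
    ((A ⊔ B : ValuationSubring K) : Set K) ⊆
      ((1 : Set K) + A.nonunits) - ((1 : Set K) + B.nonunits) := by
  intro x hx
  obtain ⟨d, e, hde, hd, hdx, he, hex⟩ := exists_mul_eq_one_of_lt_sup hA hB hx hx
  obtain ⟨h1, -, h1inv⟩ := one_add_mem_unitsSet hd
  obtain ⟨h2, -, h2inv⟩ := one_add_mem_unitsSet he
  refine Set.mem_sub.2 ⟨_, one_add_mem_one_add_nonunits (mul_mem_nonunits h1inv hdx),
    _, one_add_mem_one_add_nonunits (neg_mem (mul_mem_nonunits h2inv hex)), ?_⟩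
  field_simp
  linear_combination x * hde

end

/-- Let `Λ` be a field with valuations `v₁, v₂`, and let `v = min(v₁,v₂)`
be their finest common coarsening (the least valuation subring containing both `O_{v₁}` and
`O_{v₂}`).  If `v < v₁` and `v < v₂` strictly, then
`(1+m_{v₁})·(1+m_{v₂}) = O_v^× = O_{v₁}^×·O_{v₂}^×` and
`(1+m_{v₁}) − (1+m_{v₂}) = O_v = O_{v₁} − O_{v₂}` (pointwise operations on subsets). -/
theorem stmt_3 {Λ : Type*} [Field Λ] (O₁ O₂ O : ValuationSubring Λ)
    (hmin : IsLeast {S : ValuationSubring Λ | O₁ ≤ S ∧ O₂ ≤ S} O)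
    (hlt₁ : O₁ < O) (hlt₂ : O₂ < O) :
    ((1 : Set Λ) + (O₁.nonunits : Set Λ)) * ((1 : Set Λ) + (O₂.nonunits : Set Λ))
        = unitsSet O ∧
    unitsSet O = unitsSet O₁ * unitsSet O₂ ∧
    ((1 : Set Λ) + (O₁.nonunits : Set Λ)) - ((1 : Set Λ) + (O₂.nonunits : Set Λ))
        = (O : Set Λ) ∧
    (O : Set Λ) = (O₁ : Set Λ) - (O₂ : Set Λ) := by
  obtain rfl : O = O₁ ⊔ O₂ :=
    hmin.unique ⟨⟨le_sup_left, le_sup_right⟩, fun S hS ↦ sup_le hS.1 hS.2⟩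
  have hU₁ := unitsSet_subset_one_add_nonunits_mul hlt₁ hlt₂
  have hU₂ : ((1 : Set Λ) + O₁.nonunits) * ((1 : Set Λ) + O₂.nonunits) ⊆
      unitsSet O₁ * unitsSet O₂ :=
    Set.mul_subset_mul one_add_nonunits_subset_unitsSet one_add_nonunits_subset_unitsSet
  have hU₃ := unitsSet_mul_unitsSet_subset_sup (A := O₁) (B := O₂)
  have hO₁ := coe_subset_one_add_nonunits_sub hlt₁ hlt₂
  have hO₂ : ((1 : Set Λ) + O₁.nonunits) - ((1 : Set Λ) + O₂.nonunits) ⊆ (O₁ : Set Λ) - O₂ :=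
    Set.sub_subset_sub one_add_nonunits_subset_coe one_add_nonunits_subset_coe
  have hO₃ := coe_sub_coe_subset_sup (A := O₁) (B := O₂)
  exact ⟨(hU₂.trans hU₃).antisymm hU₁, (hU₁.trans hU₂).antisymm hU₃,
    (hO₂.trans hO₃).antisymm hO₁, (hO₁.trans hO₂).antisymm hO₃⟩
end

section
/- Let Ω|Λ be a field extension, w a valuation of Ω, v a valuation of Λ such that the restriction w|_Λ is a refinement of v (i.e. O_{w|_Λ} ⊆ O_v). Let Σ = O_{w|_Λ} \ m_v, a multiplicative subset of O_{w|_Λ}. Then the localization O_* := Σ^{-1}O_w ⊆ Ω is a valuation ring of Ω whose associated valuation w_* restricts to v on Λ, i.e. O_* ∩ Λ = O_v. -/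
/-- Let `Ω|Λ` be a field extension, `w` a valuation of `Ω` and `v` a
valuation of `Λ` such that `w|_Λ` refines `v` (i.e. `O_w ∩ Λ ⊆ O_v`).  Let
`Σ = (O_w ∩ Λ) \ m_v`, a multiplicative subset.  Then the localization
`O_* = Σ⁻¹ O_w = {a/s : a ∈ O_w, s ∈ Σ} ⊆ Ω` is a valuation ring of `Ω` whose associated
valuation `w_*` restricts to `v` on `Λ`, i.e. `O_* ∩ Λ = O_v`. -/
theorem stmt_4 {Λ Ω : Type*} [Field Λ] [Field Ω] [Algebra Λ Ω]
    (w : ValuationSubring Ω) (v : ValuationSubring Λ)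
    (hres : ∀ x : Λ, algebraMap Λ Ω x ∈ w → x ∈ v) :
    ∃ W : ValuationSubring Ω,
      (W : Set Ω) =
        {y : Ω | ∃ a ∈ w, ∃ s : Λ,
          (algebraMap Λ Ω s ∈ w ∧ s ∈ v ∧ s ∉ v.nonunits) ∧
          y = a / algebraMap Λ Ω s} ∧
      ∀ x : Λ, algebraMap Λ Ω x ∈ W ↔ x ∈ v := by
  classical
  set φ := algebraMap Λ Ω with hφ
  -- predicate for Σ
  set P : Λ → Prop := fun s => φ s ∈ w ∧ s ∈ v ∧ s ∉ v.nonunits with hP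
  have hunit : ∀ {s : Λ}, P s → v.valuation s = 1 := by
    intro s hs
    rcases hs with ⟨-, hv, hnu⟩
    rw [ValuationSubring.mem_nonunits_iff, not_lt] at hnu
    exact le_antisymm ((v.valuation_le_one_iff s).mpr hv) hnu
  have hne : ∀ {s : Λ}, P s → φ s ≠ 0 := by
    intro s hs
    have : s ≠ 0 := by
      intro h; have := hunit hs; rw [h, map_zero] at this; exact zero_ne_one this
    simpa using (map_ne_zero φ).mpr this
  have hPmul : ∀ {s t : Λ}, P s → P t → P (s * t) := by
    intro s t hs ht
    refine ⟨by rw [map_mul]; exact mul_mem hs.1 ht.1, mul_mem hs.2.1 ht.2.1, ?_⟩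
    rw [ValuationSubring.mem_nonunits_iff, map_mul, hunit hs, hunit ht, not_lt]
    simp
  have hP1 : P 1 := by
    refine ⟨by simp [one_mem], one_mem _, ?_⟩
    rw [ValuationSubring.mem_nonunits_iff]; simp
  set S : Set Ω := {y : Ω | ∃ a ∈ w, ∃ s : Λ, P s ∧ y = a / φ s} with hS
  have hwS : ∀ {a : Ω}, a ∈ w → a ∈ S := fun {a} ha => ⟨a, ha, 1, hP1, by simp⟩
  refine ⟨{ carrier := S
            one_mem' := hwS (one_mem w)
            zero_mem' := hwS (zero_mem w)
            mul_mem' := ?_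
            add_mem' := ?_
            neg_mem' := ?_
            mem_or_inv_mem' := ?_ }, rfl, ?_⟩
  · rintro x y ⟨a, ha, s, hs, rfl⟩ ⟨b, hb, t, ht, rfl⟩
    exact ⟨a * b, mul_mem ha hb, s * t, hPmul hs ht, by
      rw [map_mul]; field_simp⟩
  · rintro x y ⟨a, ha, s, hs, rfl⟩ ⟨b, hb, t, ht, rfl⟩
    refine ⟨a * φ t + b * φ s, add_mem (mul_mem ha ht.1) (mul_mem hb hs.1),
      s * t, hPmul hs ht, ?_⟩
    rw [map_mul]
    field_simp [hne hs, hne ht]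
  · rintro x ⟨a, ha, s, hs, rfl⟩
    exact ⟨-a, neg_mem ha, s, hs, by ring⟩
  · intro x
    rcases w.mem_or_inv_mem x with h | h
    · exact Or.inl (hwS h)
    · exact Or.inr (hwS h)
  · intro x
    constructor
    · rintro ⟨a, ha, s, hs, hx⟩
      have hsne := hne hs
      have hxs : φ (x * s) ∈ w := by
        rw [map_mul]
        have : φ x * φ s = a := by rw [hx]; field_simp
        rw [this]; exact ha
      have hxsv : x * s ∈ v := hres _ hxs
      have : v.valuation x ≤ 1 := by
        have h1 : v.valuation (x * s) ≤ 1 := (v.valuation_le_one_iff _).mpr hxsv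
        rwa [map_mul, hunit hs, mul_one] at h1
      exact (v.valuation_le_one_iff x).mp this
    · intro hx
      by_cases hw : φ x ∈ w
      · exact hwS hw
      · have hxne : x ≠ 0 := by
          intro h; apply hw; rw [h, map_zero]; exact zero_mem w
        have hinv : (φ x)⁻¹ ∈ w := (w.mem_or_inv_mem (φ x)).resolve_left hw
        have hinv' : φ x⁻¹ ∈ w := by rwa [map_inv₀]
        have hx1 : x⁻¹ ∈ v := hres _ hinv'
        have hPx : P x⁻¹ := by
          refine ⟨hinv', hx1, ?_⟩
          rw [ValuationSubring.mem_nonunits_iff, not_lt, map_inv₀]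
          have := (v.valuation_le_one_iff x).mpr hx
          have hne0 : v.valuation x ≠ 0 := (Valuation.ne_zero_iff _).mpr hxne
          rw [one_le_inv₀ (zero_lt_iff.mpr hne0)]
          exact this
        exact ⟨1, one_mem w, x⁻¹, hPx, by
          rw [map_inv₀]; field_simp⟩
end

section
/- Let Ω|Λ be a field extension, w a valuation of Ω, v a valuation of Λ with w|_Λ ≥ v (w|_Λ refines v). Then there exists a unique minimal coarsening w_v of w on Ω such that w_v|_Λ = v; it satisfies O_{w_v} ∩ Λ = O_v, m_{w_v} ∩ Λ = m_v, and moreover O_{w_v}^× ∩ Λ = O_v^× and (1+m_{w_v}) ∩ Λ = 1+m_v. -/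
/-- In a valuation subring of a field, a nonzero element is a nonunit iff its inverse
is not in the subring. -/
lemma ValuationSubring.mem_nonunits_iff_inv_not_mem {K : Type*} [Field K]
    (A : ValuationSubring K) {x : K} (hx : x ≠ 0) :
    x ∈ A.nonunits ↔ x⁻¹ ∉ A := by
  rw [ValuationSubring.mem_nonunits_iff, ← ValuationSubring.valuation_le_one_iff, map_inv₀]
  have h0 : A.valuation x ≠ 0 := by
    simpa using (A.valuation.ne_zero_iff).mpr hx
  constructor
  · intro h hc
    rw [inv_le_one₀ (by exact lt_of_le_of_ne (zero_le') (Ne.symm h0))] at hc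
    exact absurd h (not_lt.mpr hc)
  · intro h
    rw [inv_le_one₀ (by exact lt_of_le_of_ne (zero_le') (Ne.symm h0))] at h
    exact lt_of_not_ge h

lemma ValuationSubring.zero_mem_nonunits {K : Type*} [Field K] (A : ValuationSubring K) :
    (0 : K) ∈ A.nonunits := by
  rw [ValuationSubring.mem_nonunits_iff, map_zero]
  exact zero_lt_one

/-- Let `Ω|Λ` be a field extension, `w` a valuation of `Ω`, `v` a
valuation of `Λ` with `w|_Λ ≥ v` (the restriction of `w` refines `v`).  Then there is a
unique minimal coarsening `w_v` of `w` (valuation subring `W ⊇ O_w`) with `w_v|_Λ = v`;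
it satisfies `O_{w_v} ∩ Λ = O_v`, `m_{w_v} ∩ Λ = m_v`, `O_{w_v}^× ∩ Λ = O_v^×` and
`(1+m_{w_v}) ∩ Λ = 1+m_v`. -/
theorem stmt_5 {Λ Ω : Type*} [Field Λ] [Field Ω] [Algebra Λ Ω]
    (w : ValuationSubring Ω) (v : ValuationSubring Λ)
    (hres : ∀ x : Λ, algebraMap Λ Ω x ∈ w → x ∈ v) :
    ∃! W : ValuationSubring Ω,
      (w ≤ W ∧ W.comap (algebraMap Λ Ω) = v ∧
        ∀ W' : ValuationSubring Ω, w ≤ W' → W'.comap (algebraMap Λ Ω) = v → W ≤ W') ∧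
      (∀ x : Λ, algebraMap Λ Ω x ∈ W ↔ x ∈ v) ∧
      (∀ x : Λ, algebraMap Λ Ω x ∈ W.nonunits ↔ x ∈ v.nonunits) ∧
      (∀ x : Λ, (algebraMap Λ Ω x ∈ W ∧ (algebraMap Λ Ω x)⁻¹ ∈ W) ↔
        (x ∈ v ∧ x⁻¹ ∈ v)) ∧
      (∀ x : Λ, algebraMap Λ Ω x - 1 ∈ W.nonunits ↔ x - 1 ∈ v.nonunits) := by
  set φ := algebraMap Λ Ω with hφ
  -- The candidate subring: elements bounded by the image of a `v`-unit.
  set S : Subring Ω :=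
    { carrier := {y | ∃ d : Λ, d ≠ 0 ∧ d ∈ v ∧ d⁻¹ ∈ v ∧ (φ d)⁻¹ ∈ w ∧ (φ d)⁻¹ * y ∈ w}
      one_mem' := ⟨1, one_ne_zero, one_mem _, by simp [one_mem], by simp [one_mem], by
        simp [one_mem]⟩
      zero_mem' := ⟨1, one_ne_zero, one_mem _, by simp [one_mem], by simp [one_mem], by
        simp [zero_mem]⟩
      mul_mem' := by
        rintro y₁ y₂ ⟨d₁, hd₁0, hd₁, hd₁', hw₁, hy₁⟩ ⟨d₂, hd₂0, hd₂, hd₂', hw₂, hy₂⟩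
        refine ⟨d₁ * d₂, mul_ne_zero hd₁0 hd₂0, mul_mem hd₁ hd₂, by
          rw [mul_inv]; exact mul_mem hd₁' hd₂', by
          rw [map_mul, mul_inv]; exact mul_mem hw₁ hw₂, ?_⟩
        have : (φ (d₁ * d₂))⁻¹ * (y₁ * y₂) = ((φ d₁)⁻¹ * y₁) * ((φ d₂)⁻¹ * y₂) := by
          rw [map_mul, mul_inv]; ring
        rw [this]; exact mul_mem hy₁ hy₂
      add_mem' := by
        rintro y₁ y₂ ⟨d₁, hd₁0, hd₁, hd₁', hw₁, hy₁⟩ ⟨d₂, hd₂0, hd₂, hd₂', hw₂, hy₂⟩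
        refine ⟨d₁ * d₂, mul_ne_zero hd₁0 hd₂0, mul_mem hd₁ hd₂, by
          rw [mul_inv]; exact mul_mem hd₁' hd₂', by
          rw [map_mul, mul_inv]; exact mul_mem hw₁ hw₂, ?_⟩
        have : (φ (d₁ * d₂))⁻¹ * (y₁ + y₂)
            = (φ d₂)⁻¹ * ((φ d₁)⁻¹ * y₁) + (φ d₁)⁻¹ * ((φ d₂)⁻¹ * y₂) := by
          rw [map_mul, mul_inv]; ring
        rw [this]; exact add_mem (mul_mem hw₂ hy₁) (mul_mem hw₁ hy₂)
      neg_mem' := by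
        rintro y ⟨d, hd0, hd, hd', hw', hy⟩
        exact ⟨d, hd0, hd, hd', hw', by rw [mul_neg]; exact neg_mem hy⟩ } with hS
  have hwS : w.toSubring ≤ S := by
    intro y hy
    exact ⟨1, one_ne_zero, one_mem _, by simp [one_mem], by simp [one_mem], by simpa using hy⟩
  set W : ValuationSubring Ω :=
    ⟨S, fun y => (w.mem_or_inv_mem y).imp (fun h => hwS h) (fun h => hwS h)⟩ with hW
  have hφinj : Function.Injective φ := (algebraMap Λ Ω).injective
  -- the key membership property
  have hmem : ∀ x : Λ, φ x ∈ W ↔ x ∈ v := by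
    intro x
    constructor
    · rintro ⟨d, hd0, hd, hd', hw', hy⟩
      have h1 : (φ d)⁻¹ * φ x = φ (d⁻¹ * x) := by rw [map_mul, map_inv₀]
      rw [h1] at hy
      have h2 : d⁻¹ * x ∈ v := hres _ hy
      have : d * (d⁻¹ * x) = x := by field_simp
      rw [← this]; exact mul_mem hd h2
    · intro hx
      by_cases hxw : φ x ∈ w
      · exact hwS hxw
      · have hx0 : x ≠ 0 := by
          rintro rfl; exact hxw (by simpa using zero_mem w.toSubring)
        have hφx0 : φ x ≠ 0 := fun hc => hx0 (hφinj (by simpa using hc))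
        have hinvw : (φ x)⁻¹ ∈ w := (w.mem_or_inv_mem (φ x)).resolve_left hxw
        have hinvv : x⁻¹ ∈ v := hres _ (by rwa [map_inv₀])
        exact ⟨x, hx0, hx, hinvv, hinvw, by rw [inv_mul_cancel₀ hφx0]; exact one_mem _⟩
  have hwW : w ≤ W := fun y hy => hwS hy
  have hcomap : W.comap φ = v := by
    ext x
    rw [ValuationSubring.mem_comap]
    exact hmem x
  have hmin : ∀ W' : ValuationSubring Ω, w ≤ W' → W'.comap φ = v → W ≤ W' := by
    intro W' hwW' hcom y hy
    obtain ⟨d, hd0, hd, hd', hw', hyd⟩ := hy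
    have hφd : φ d ∈ W' := by
      rw [← hcom] at hd
      exact hd
    have hφd0 : φ d ≠ 0 := fun hc => hd0 (hφinj (by simpa using hc))
    have : y = φ d * ((φ d)⁻¹ * y) := by rw [mul_inv_cancel_left₀ hφd0]
    rw [this]
    exact mul_mem hφd (hwW' hyd)
  -- the nonunits property, derived purely from `hmem`
  have hnonunits : ∀ x : Λ, φ x ∈ W.nonunits ↔ x ∈ v.nonunits := by
    intro x
    by_cases hx0 : x = 0
    · subst hx0
      simp only [map_zero]
      exact ⟨fun _ => v.zero_mem_nonunits, fun _ => W.zero_mem_nonunits⟩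
    · have hφx0 : φ x ≠ 0 := fun hc => hx0 (hφinj (by simpa using hc))
      rw [W.mem_nonunits_iff_inv_not_mem hφx0, v.mem_nonunits_iff_inv_not_mem hx0,
        ← map_inv₀, hmem]
  refine ⟨W, ⟨⟨hwW, hcomap, hmin⟩, hmem, hnonunits, ?_, ?_⟩, ?_⟩
  · intro x
    rw [← map_inv₀, hmem, hmem]
  · intro x
    have : φ x - 1 = φ (x - 1) := by rw [map_sub, map_one]
    rw [this]
    exact hnonunits (x - 1)
  · rintro W₂ ⟨⟨hwW₂, hcomap₂, hmin₂⟩, -, -, -, -⟩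
    exact le_antisymm (hmin₂ W hwW hcomap) (hmin W₂ hwW₂ hcomap₂)
end
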